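/- arXiv:1811.08651 — 3 statements merged into one kernel-verified Lean document; each statement's English description precedes it below -/
import Mathlib

section
/- Let E ⊆ ℝⁿ be a bounded convex set with nonempty interior. Then its outer radius satisfies ρ̄(E) ≤ diam(E)/√2, where ρ̄(E) = inf{r > 0 : ∃x₀, E ⊆ B_r(x₀)}. -/
open Metric Set Finset
open scoped RealInnerProductSpace

variable {H : Type*} [NormedAddCommGroup H] [InnerProductSpace ℝ H] [FiniteDimensional ℝ H]

set_option maxHeartbeats 1000000 in
theorem key_center {K : Set H} (hK : IsCompact K) (hne : K.Nonempty) :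
    ∃ x₀ : H, ∀ z ∈ K, dist x₀ z ≤ Metric.diam K / Real.sqrt 2 := by
  set d := Metric.diam K with hd
  have hd0 : 0 ≤ d := Metric.diam_nonneg
  -- the sup-distance function
  set f : H → ℝ := fun x => sSup ((dist x) '' K) with hf
  have hbdd : ∀ x : H, BddAbove ((dist x) '' K) := fun x =>
    (hK.image (continuous_const.dist continuous_id)).bddAbove
  have hfz : ∀ x : H, ∀ z ∈ K, dist x z ≤ f x := fun x z hz =>
    le_csSup (hbdd x) (mem_image_of_mem _ hz)
  have hfle : ∀ (x : H) (r : ℝ), (∀ z ∈ K, dist x z ≤ r) → f x ≤ r := by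
    intro x r h
    exact csSup_le (hne.image _) (by rintro _ ⟨z, hz, rfl⟩; exact h z hz)
  have hlip : ∀ x y : H, f x ≤ f y + dist x y := by
    intro x y
    refine hfle x _ fun z hz => ?_
    calc dist x z ≤ dist y z + dist x y := by
          rw [dist_comm x y, add_comm]; exact dist_triangle_left x z y
      _ ≤ f y + dist x y := by linarith [hfz y z hz]
  have hcont : Continuous f := by
    refine LipschitzWith.continuous (K := 1) (LipschitzWith.of_dist_le_mul fun x y => ?_)
    rw [Real.dist_eq, abs_le]
    push_cast
    rw [one_mul]
    constructor
    · have := hlip y x; rw [dist_comm] at this; linarith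
    · have := hlip x y; linarith
  obtain ⟨p, hp⟩ := id hne
  set C : Set H := Metric.closedBall p (d + 1) with hC
  have hCc : IsCompact C := isCompact_closedBall p (d + 1)
  have hCne : C.Nonempty := ⟨p, by simp only [hC, mem_closedBall, dist_self]; linarith⟩
  obtain ⟨x₀, hx₀C, hmin⟩ := hCc.exists_isMinOn hCne hcont.continuousOn
  set R := f x₀ with hR
  have hfp : f p ≤ d := hfle p d fun z hz => Metric.dist_le_diam_of_mem hK.isBounded hp hz
  have hRd : R ≤ d := le_trans (hmin (by simp only [hC, mem_closedBall, dist_self]; linarith)) hfp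
  have hx₀p : dist x₀ p ≤ R := hfz x₀ p hp
  have main : R ≤ d / Real.sqrt 2 := by
    by_contra hcon
    push_neg at hcon
    have hs2 : (0:ℝ) < Real.sqrt 2 := Real.sqrt_pos.2 (by norm_num)
    have hR0 : 0 < R := lt_of_le_of_lt (div_nonneg hd0 hs2.le) hcon
    -- the farthest-point set
    set F : Set H := {z ∈ K | dist x₀ z = R} with hF
    have hFK : F ⊆ K := fun z hz => hz.1
    have hFne : F.Nonempty := by
      obtain ⟨z₁, hz₁, hmax⟩ := hK.exists_isMaxOn hne
        (continuous_const.dist continuous_id).continuousOn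
      refine ⟨z₁, hz₁, le_antisymm (hfz x₀ z₁ hz₁) (hfle x₀ _ fun z hz => hmax hz)⟩
    have hFR : ∀ z ∈ F, dist x₀ z = R := fun z hz => hz.2
    -- key fact : squared diameter bound
    have hdsq : d ^ 2 < 2 * R ^ 2 := by
      have : d < R * Real.sqrt 2 := by
        rw [div_lt_iff₀ hs2] at hcon; exact hcon
      calc d ^ 2 < (R * Real.sqrt 2) ^ 2 := by
            apply pow_lt_pow_left₀ this hd0; norm_num
        _ = 2 * R ^ 2 := by
            rw [mul_pow, Real.sq_sqrt (by norm_num : (2:ℝ) ≥ 0)]; ring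
    by_cases hcase : x₀ ∈ closure (convexHull ℝ F)
    · -- x₀ in the closure of the convex hull of F
      set ρ : ℝ := (R + d / Real.sqrt 2) / 2 with hρdef
      have hρ1 : d / Real.sqrt 2 < ρ := by rw [hρdef]; linarith
      have hρ2 : ρ < R := by rw [hρdef]; linarith
      have hρ0 : 0 ≤ ρ := le_trans (div_nonneg hd0 hs2.le) hρ1.le
      have hρsq : d ^ 2 < 2 * ρ ^ 2 := by
        have h1 : (d / Real.sqrt 2) ^ 2 < ρ ^ 2 :=
          pow_lt_pow_left₀ hρ1 (div_nonneg hd0 hs2.le) (by norm_num)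
        have h2 : (d / Real.sqrt 2) ^ 2 = d ^ 2 / 2 := by
          rw [div_pow, Real.sq_sqrt (by norm_num : (0:ℝ) ≤ 2)]
        nlinarith
      have hε : 0 < R - ρ := by linarith
      obtain ⟨y, hy, hxy⟩ := Metric.mem_closure_iff.1 hcase _ hε
      rw [_root_.convexHull_eq] at hy
      obtain ⟨ι, t, w, zf, hw0, hw1, hzF, hyc⟩ := hy
      have hyc' : (∑ i ∈ t, w i • zf i) = y := by
        rw [← hyc, Finset.centerMass_eq_of_sum_1 _ _ hw1]
      have hsum : (∑ i ∈ t, w i • (zf i - y)) = 0 := by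
        simp only [smul_sub]
        rw [Finset.sum_sub_distrib, ← Finset.sum_smul, hw1, one_smul, hyc', sub_self]
      have hnorm : ∀ i ∈ t, ρ ≤ ‖zf i - y‖ := by
        intro i hi
        have h1 : dist x₀ (zf i) = R := hFR _ (hzF i hi)
        have h2 : dist x₀ (zf i) ≤ dist x₀ y + dist y (zf i) := dist_triangle _ _ _
        have h3 : dist y (zf i) = ‖zf i - y‖ := by rw [dist_comm, dist_eq_norm]
        linarith
      have hwsum : (∑ i ∈ t, w i) ≠ 0 := by rw [hw1]; norm_num
      obtain ⟨i₀, hi₀t, hwi₀⟩ := Finset.exists_ne_zero_of_sum_ne_zero hwsum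
      have hsa : (∑ i ∈ t, w i * ⟪zf i - y, zf i₀ - y⟫) = 0 := by
        have heq : (∑ i ∈ t, w i * ⟪zf i - y, zf i₀ - y⟫)
            = ⟪∑ i ∈ t, w i • (zf i - y), zf i₀ - y⟫ := by
          rw [sum_inner]
          exact Finset.sum_congr rfl fun i _ => (real_inner_smul_left _ _ _).symm
        rw [heq, hsum, inner_zero_left]
      have hex : ∃ i ∈ t, w i ≠ 0 ∧ ⟪zf i - y, zf i₀ - y⟫ ≤ 0 := by
        by_contra hno
        push_neg at hno
        have hpos : 0 < ∑ i ∈ t, w i * ⟪zf i - y, zf i₀ - y⟫ := by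
          apply Finset.sum_pos'
          · intro i hi
            rcases eq_or_ne (w i) 0 with h | h
            · simp [h]
            · exact le_of_lt (mul_pos ((hw0 i hi).lt_of_ne (Ne.symm h)) (hno i hi h))
          · exact ⟨i₀, hi₀t, mul_pos ((hw0 i₀ hi₀t).lt_of_ne (Ne.symm hwi₀)) (hno i₀ hi₀t hwi₀)⟩
        rw [hsa] at hpos; exact lt_irrefl 0 hpos
      obtain ⟨i, hit, hwi, hip⟩ := hex
      have hzi : zf i ∈ K := hFK (hzF i hit)
      have hzi₀ : zf i₀ ∈ K := hFK (hzF i₀ hi₀t)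
      have hdd : dist (zf i) (zf i₀) ≤ d := Metric.dist_le_diam_of_mem hK.isBounded hzi hzi₀
      have habel : (zf i - y) - (zf i₀ - y) = zf i - zf i₀ := by abel
      have hexp : ‖zf i - zf i₀‖ ^ 2
          = ‖zf i - y‖ ^ 2 - 2 * ⟪zf i - y, zf i₀ - y⟫ + ‖zf i₀ - y‖ ^ 2 := by
        rw [← habel, norm_sub_sq_real]
      have hni := hnorm i hit
      have hni₀ := hnorm i₀ hi₀t
      have hdn : dist (zf i) (zf i₀) = ‖zf i - zf i₀‖ := dist_eq_norm _ _
      have hq1 : ρ ^ 2 ≤ ‖zf i - y‖ ^ 2 := pow_le_pow_left₀ hρ0 hni 2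
      have hq2 : ρ ^ 2 ≤ ‖zf i₀ - y‖ ^ 2 := pow_le_pow_left₀ hρ0 hni₀ 2
      have hq3 : ‖zf i - zf i₀‖ ^ 2 ≤ d ^ 2 :=
        pow_le_pow_left₀ (norm_nonneg _) (hdn ▸ hdd) 2
      linarith
    · -- x₀ can be separated from the farthest-point set
      have hconvF : Convex ℝ (closure (convexHull ℝ F)) := (convex_convexHull ℝ F).closure
      obtain ⟨φ, u, hφx, hφF⟩ :=
        geometric_hahn_banach_point_closed hconvF isClosed_closure hcase
      set v : H := (InnerProductSpace.toDual ℝ H).symm φ with hvdef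
      have hvy : ∀ y : H, ⟪v, y⟫ = φ y := fun y => InnerProductSpace.toDual_symm_apply
      set δ : ℝ := u - φ x₀ with hδdef
      have hδ0 : 0 < δ := sub_pos.2 hφx
      have hvF : ∀ z ∈ F, δ ≤ ⟪v, z - x₀⟫ := by
        intro z hz
        have h1 : u < φ z := hφF z (subset_closure (subset_convexHull ℝ F hz))
        have h2 : ⟪v, z - x₀⟫ = φ z - φ x₀ := by rw [hvy, map_sub]
        rw [h2, hδdef]; linarith
      have hv0 : v ≠ 0 := by
        obtain ⟨z, hz⟩ := hFne
        intro h0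
        have := hvF z hz
        rw [h0, inner_zero_left] at this
        linarith
      have hnv : 0 < ‖v‖ := norm_pos_iff.2 hv0
      set K₁ : Set H := K ∩ {z | ⟪v, z - x₀⟫ ≤ δ / 2} with hK₁def
      have hK₁c : IsCompact K₁ :=
        hK.inter_right (isClosed_le (Continuous.inner continuous_const
          (continuous_id.sub continuous_const)) continuous_const)
      have hM : ∃ M, 0 ≤ M ∧ M < R ∧ ∀ z ∈ K₁, dist x₀ z ≤ M := by
        rcases K₁.eq_empty_or_nonempty with hemp | hK₁ne
        · exact ⟨R / 2, by linarith, by linarith, by simp [hemp]⟩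
        · obtain ⟨z₁, hz₁, hmax₁⟩ := hK₁c.exists_isMaxOn hK₁ne
            (continuous_const.dist continuous_id).continuousOn
          refine ⟨dist x₀ z₁, dist_nonneg, ?_, fun z hz => hmax₁ hz⟩
          rcases lt_or_eq_of_le (hfz x₀ z₁ hz₁.1) with h | h
          · exact h
          · exfalso
            have hz₁F : z₁ ∈ F := ⟨hz₁.1, h⟩
            have := hvF z₁ hz₁F
            have h2 := hz₁.2
            simp only [mem_setOf_eq] at h2
            linarith
      obtain ⟨M, hM0, hMR, hMb⟩ := hM
      set t : ℝ := min (1 / ‖v‖) (min ((R - M) / (2 * ‖v‖)) (δ / (2 * ‖v‖ ^ 2))) with htdef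
      have ht0 : 0 < t := by
        refine lt_min (by positivity) (lt_min ?_ (by positivity))
        apply div_pos (by linarith) (by positivity)
      set x₁ : H := x₀ + t • v with hx₁def
      have hdist10 : dist x₁ x₀ = t * ‖v‖ := by
        rw [hx₁def, dist_eq_norm, add_sub_cancel_left, norm_smul,
          Real.norm_eq_abs, abs_of_pos ht0]
      have htv1 : t * ‖v‖ ≤ 1 := by
        calc t * ‖v‖ ≤ 1 / ‖v‖ * ‖v‖ :=
              mul_le_mul_of_nonneg_right (min_le_left _ _) hnv.le
          _ = 1 := by field_simp
      have htv2 : t * ‖v‖ ≤ (R - M) / 2 := by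
        calc t * ‖v‖ ≤ (R - M) / (2 * ‖v‖) * ‖v‖ :=
              mul_le_mul_of_nonneg_right ((min_le_right _ _).trans (min_le_left _ _)) hnv.le
          _ = (R - M) / 2 := by field_simp
      have htv3 : t * ‖v‖ ^ 2 ≤ δ / 2 := by
        calc t * ‖v‖ ^ 2 ≤ δ / (2 * ‖v‖ ^ 2) * ‖v‖ ^ 2 :=
              mul_le_mul_of_nonneg_right ((min_le_right _ _).trans (min_le_right _ _))
                (by positivity)
          _ = δ / 2 := by field_simp
      have hx₁C : x₁ ∈ C := by
        rw [hC, mem_closedBall]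
        calc dist x₁ p ≤ dist x₁ x₀ + dist x₀ p := dist_triangle _ _ _
          _ ≤ t * ‖v‖ + R := by rw [hdist10]; linarith
          _ ≤ d + 1 := by linarith
      set B : ℝ := max ((R + M) / 2) (Real.sqrt (R ^ 2 - t * δ / 2)) with hBdef
      have hBR : B < R := by
        apply max_lt (by linarith)
        rw [Real.sqrt_lt' hR0]
        nlinarith
      have hfx₁ : f x₁ ≤ B := by
        apply hfle
        intro z hz
        by_cases hz1 : z ∈ K₁
        · calc dist x₁ z ≤ dist x₁ x₀ + dist x₀ z := dist_triangle _ _ _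
            _ ≤ t * ‖v‖ + M := add_le_add (le_of_eq hdist10) (hMb z hz1)
            _ ≤ (R + M) / 2 := by linarith
            _ ≤ B := le_max_left _ _
        · have hzin : δ / 2 < ⟪v, z - x₀⟫ := by
            by_contra hle
            push_neg at hle
            exact hz1 ⟨hz, hle⟩
          have hsplit : x₁ - z = (x₀ - z) + t • v := by rw [hx₁def]; abel
          have h5 : ⟪x₀ - z, t • v⟫ = -(t * ⟪v, z - x₀⟫) := by
            rw [real_inner_smul_right, real_inner_comm, show x₀ - z = -(z - x₀) by abel,
              inner_neg_right]
            ring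
          have hsq : dist x₁ z ^ 2
              = dist x₀ z ^ 2 - 2 * (t * ⟪v, z - x₀⟫) + t ^ 2 * ‖v‖ ^ 2 := by
            rw [dist_eq_norm, dist_eq_norm, hsplit, norm_add_sq_real, h5, norm_smul,
              Real.norm_eq_abs, abs_of_pos ht0, mul_pow]
            ring
          have hdz : dist x₀ z ^ 2 ≤ R ^ 2 :=
            pow_le_pow_left₀ dist_nonneg (hfz x₀ z hz) 2
          have ht2 : t ^ 2 * ‖v‖ ^ 2 ≤ t * (δ / 2) := by
            have : t ^ 2 * ‖v‖ ^ 2 = t * (t * ‖v‖ ^ 2) := by ring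
            rw [this]
            exact mul_le_mul_of_nonneg_left htv3 ht0.le
          have hbound : dist x₁ z ^ 2 ≤ R ^ 2 - t * δ / 2 := by
            have h6 : t * δ / 2 < t * ⟪v, z - x₀⟫ := by
              have := mul_lt_mul_of_pos_left hzin ht0
              linarith
            linarith [hsq, hdz, ht2, h6]
          calc dist x₁ z = Real.sqrt (dist x₁ z ^ 2) := (Real.sqrt_sq dist_nonneg).symm
            _ ≤ Real.sqrt (R ^ 2 - t * δ / 2) := Real.sqrt_le_sqrt hbound
            _ ≤ B := le_max_right _ _
      have := hmin hx₁C
      have : R ≤ f x₁ := this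
      linarith
  exact ⟨x₀, fun z hz => le_trans (hfz x₀ z hz) main⟩

theorem outer_radius_le_diam_div_sqrt_two (n : ℕ)
    (E : Set (EuclideanSpace ℝ (Fin n)))
    (hE : Bornology.IsBounded E) (hconv : Convex ℝ E)
    (hint : (interior E).Nonempty) :
    sInf {r : ℝ | 0 < r ∧ ∃ x₀, E ⊆ Metric.ball x₀ r}
      ≤ Metric.diam E / Real.sqrt 2 := by
  have hEne : E.Nonempty := hint.mono interior_subset
  have hK : IsCompact (closure E) := hE.isCompact_closure
  have hKne : (closure E).Nonempty := hEne.closure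
  obtain ⟨x₀, hx₀⟩ := key_center hK hKne
  have hdiam : Metric.diam (closure E) = Metric.diam E := Metric.diam_closure (s := E)
  have hbdd : BddBelow {r : ℝ | 0 < r ∧ ∃ x₀, E ⊆ Metric.ball x₀ r} :=
    ⟨0, fun r hr => hr.1.le⟩
  have hd20 : 0 ≤ Metric.diam E / Real.sqrt 2 :=
    div_nonneg Metric.diam_nonneg (Real.sqrt_nonneg 2)
  refine le_of_forall_pos_le_add fun ε hε => ?_
  refine csInf_le hbdd ⟨by linarith, x₀, fun z hz => ?_⟩
  rw [Metric.mem_ball, dist_comm]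
  have h := hx₀ z (subset_closure hz)
  rw [hdiam] at h
  linarith
end

section
/- Let E ⊆ ℝⁿ be a bounded convex set with nonempty interior. Then its inner radius satisfies ρ̲(E) ≥ w̲(E)/(n+1), where ρ̲(E) = sup{r > 0 : ∃x₀, B_r(x₀) ⊆ E} and w̲(E) = inf over unit vectors ω of the width w_E(ω) = sup_{x,y∈E}(x−y)·ω. -/
/-!
By Helly's theorem it suffices to find, for any `n + 1` unit vectors `u₀, …, uₙ`, a point `x` of
`K = closure E` with `⟪uᵢ, x⟫ ≤ max_K ⟪uᵢ, ·⟫ - ρ` for all `i`, where `ρ = w̲(E) / (n + 1)`.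
The barycenter of points `pᵢ ∈ K` minimising `⟪uᵢ, ·⟫` does it: in the average defining
`⟪uᵢ, x⟫`, the term `⟪uᵢ, pᵢ⟫` lies at least `w̲(E)` below the maximum and no term lies above it.
A point `x₀` lying in all these shrunk supporting half-spaces of `K` is the center of a ball of
radius `ρ` inside `K`, hence inside `interior K = interior E`.
-/

open Metric Set Finset Module
open scoped RealInnerProductSpace

theorem Convex.exists_mem_forall_le_sub_of_card_le {V ι : Type*} [AddCommGroup V] [Module ℝ V]
    {K : Set V} (hK : Convex ℝ K) {ρ : ℝ} (hρ : 0 ≤ ρ) {I : Finset ι} (hI : I.Nonempty) {k : ℕ}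
    (hIk : #I ≤ k) (f : ι → V →ₗ[ℝ] ℝ) (M : ι → ℝ) (p : ι → V) (hp : ∀ i ∈ I, p i ∈ K)
    (hM : ∀ i ∈ I, ∀ j ∈ I, f i (p j) ≤ M i) (hw : ∀ i ∈ I, k * ρ ≤ M i - f i (p i)) :
    ∃ x ∈ K, ∀ i ∈ I, f i x ≤ M i - ρ := by
  have hcard : (0 : ℝ) < #I := by exact_mod_cast hI.card_pos
  refine ⟨∑ j ∈ I, (#I : ℝ)⁻¹ • p j,
    hK.sum_mem (fun _ _ => by positivity) (by simp [hcard.ne']) hp, fun i hi => ?_⟩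
  have hdefect : (k : ℝ) * ρ ≤ ∑ j ∈ I, (M i - f i (p j)) :=
    (hw i hi).trans (single_le_sum (fun j hj => sub_nonneg.2 (hM i hi j hj)) hi)
  have hkρ : (#I : ℝ) * ρ ≤ k * ρ := by gcongr
  simp only [map_sum, map_smul, smul_eq_mul, ← mul_sum, sum_sub_distrib, sum_const,
    nsmul_eq_mul] at hdefect ⊢
  rw [inv_mul_le_iff₀ hcard]
  linarith

section InnerProductSpace

variable {V : Type*} [NormedAddCommGroup V] [InnerProductSpace ℝ V]

theorem Convex.ball_subset_of_forall_inner_le_sub [CompleteSpace V] {K : Set V}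
    (hK : Convex ℝ K) (hKc : IsClosed K) (hKne : K.Nonempty) {x₀ : V} {ρ : ℝ}
    (h : ∀ u, ‖u‖ = 1 → ∃ z ∈ K, ⟪u, x₀⟫ ≤ ⟪u, z⟫ - ρ) :
    ball x₀ ρ ⊆ K := by
  intro y hy
  by_contra hyK
  obtain ⟨f, c, hfK, hfy⟩ := geometric_hahn_banach_closed_point hK hKc hyK
  set w := (InnerProductSpace.toDual ℝ V).symm f
  have hw : ∀ x, ⟪w, x⟫ = f x := fun x => InnerProductSpace.toDual_symm_apply
  have hw0 : 0 < ‖w‖ := by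
    obtain ⟨a, ha⟩ := hKne
    refine norm_pos_iff.2 fun hw0 => ?_
    have := hfK a ha
    simp only [← hw, hw0, inner_zero_left] at this hfy
    linarith
  obtain ⟨z, hz, hzρ⟩ := h (‖w‖⁻¹ • w) (by simp [norm_smul, hw0.ne'])
  rw [le_sub_comm, real_inner_smul_left, real_inner_smul_left, ← mul_sub,
    le_inv_mul_iff₀ hw0] at hzρ
  have hyx₀ : ⟪w, y - x₀⟫ < ‖w‖ * ρ :=
    (real_inner_le_norm _ _).trans_lt (by gcongr; rwa [mem_ball, dist_eq_norm] at hy)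
  have hzc := hfK z hz
  rw [← hw] at hzc hfy
  rw [inner_sub_right] at hyx₀
  linarith

theorem IsCompact.exists_ball_subset_of_forall_width [FiniteDimensional ℝ V] {K : Set V}
    (hKc : IsCompact K) (hK : Convex ℝ K) (hKne : K.Nonempty) {ρ : ℝ} (hρ : 0 ≤ ρ)
    (hwidth : ∀ u, ‖u‖ = 1 → ∃ z ∈ K, ∃ p ∈ K, (finrank ℝ V + 1) * ρ ≤ ⟪z - p, u⟫) :
    ∃ x₀, ball x₀ ρ ⊆ K := by
  choose m hmK hm using fun u : V => hKc.exists_isMaxOn hKne (f := (⟪u, ·⟫)) (by fun_prop)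
  choose z hz p hp hzp using hwidth
  let F : sphere (0 : V) 1 → Set V := fun u => K ∩ {x | ⟪(u : V), x⟫ ≤ ⟪(u : V), m u⟫ - ρ}
  obtain ⟨x₀, hx₀⟩ : (⋂ u, F u).Nonempty := by
    refine Convex.helly_theorem_compact' (𝕜 := ℝ)
      (fun u => hK.inter (convex_halfSpace_le (innerₗ V (u : V)).isLinear _))
      (fun u => hKc.inter_right (isClosed_le (by fun_prop) continuous_const)) fun I hI => ?_
    rcases I.eq_empty_or_nonempty with rfl | hIne
    · simp
    have hu : ∀ u : sphere (0 : V) 1, ‖(u : V)‖ = 1 := fun u => by simp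
    obtain ⟨x, hxK, hx⟩ := hK.exists_mem_forall_le_sub_of_card_le hρ hIne hI
      (fun u => innerₗ V (u : V)) (fun u => ⟪(u : V), m u⟫) (fun u => p u (hu u))
      (fun u _ => hp u (hu u)) (fun u _ v _ => hm u (hp v (hu v))) fun u _ => by
        have hzm : ⟪(u : V), z u (hu u)⟫ ≤ ⟪(u : V), m u⟫ := hm u (hz u (hu u))
        have hzp := hzp u (hu u)
        rw [inner_sub_left, real_inner_comm (u : V), real_inner_comm (u : V)] at hzp
        simp only [innerₗ_apply_apply]
        push_cast
        linarith
    exact ⟨x, mem_iInter₂.2 fun u hu => ⟨hxK, hx u hu⟩⟩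
  exact ⟨x₀, hK.ball_subset_of_forall_inner_le_sub hKc.isClosed hKne fun u hu =>
    ⟨m u, hmK u, (mem_iInter.1 hx₀ ⟨u, by simpa using hu⟩).2⟩⟩

noncomputable def directionalWidth (E : Set V) (ω : V) : ℝ :=
  sSup {c : ℝ | ∃ x ∈ E, ∃ y ∈ E, c = inner ℝ (x - y) ω}

variable [ProperSpace V] {E : Set V}

theorem Bornology.IsBounded.exists_mem_closure_forall_inner_sub_le (hE : Bornology.IsBounded E)
    (hEne : E.Nonempty) (ω : V) :
    ∃ z ∈ closure E, ∃ p ∈ closure E, ∀ x ∈ E, ∀ y ∈ E, ⟪x - y, ω⟫ ≤ ⟪z - p, ω⟫ := by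
  obtain ⟨⟨z, p⟩, ⟨hz, hp⟩, hmax⟩ :=
    (hE.isCompact_closure.prod hE.isCompact_closure).exists_isMaxOn (hEne.closure.prod hEne.closure)
      (f := fun q : V × V => ⟪q.1 - q.2, ω⟫) (by fun_prop)
  exact ⟨z, hz, p, hp, fun x hx y hy => hmax (mk_mem_prod (subset_closure hx) (subset_closure hy))⟩

theorem Bornology.IsBounded.exists_directionalWidth_le (hE : Bornology.IsBounded E)
    (hEne : E.Nonempty) (ω : V) :
    ∃ z ∈ closure E, ∃ p ∈ closure E, directionalWidth E ω ≤ ⟪z - p, ω⟫ := by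
  obtain ⟨z, hz, p, hp, hzp⟩ := hE.exists_mem_closure_forall_inner_sub_le hEne ω
  obtain ⟨x, hx⟩ := hEne
  refine ⟨z, hz, p, hp, csSup_le ⟨_, x, hx, x, hx, rfl⟩ ?_⟩
  rintro _ ⟨x, hx, y, hy, rfl⟩
  exact hzp x hx y hy

theorem Bornology.IsBounded.directionalWidth_nonneg (hE : Bornology.IsBounded E) (ω : V) :
    0 ≤ directionalWidth E ω := by
  rcases E.eq_empty_or_nonempty with rfl | hEne
  · simp [directionalWidth]
  obtain ⟨z, -, p, -, hzp⟩ := hE.exists_mem_closure_forall_inner_sub_le hEne ω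
  obtain ⟨x, hx⟩ := hEne
  refine le_csSup ⟨⟪z - p, ω⟫, ?_⟩ ⟨x, hx, x, hx, by simp⟩
  rintro _ ⟨x, hx, y, hy, rfl⟩
  exact hzp x hx y hy

end InnerProductSpace

theorem Bornology.IsBounded.bddAbove_setOf_ball_subset {V : Type*} [NormedAddCommGroup V]
    [NormedSpace ℝ V] [Nontrivial V] {E : Set V} (hE : Bornology.IsBounded E) :
    BddAbove {r : ℝ | 0 < r ∧ ∃ x₀, ball x₀ r ⊆ E} := by
  refine ⟨diam E / 2, fun r ⟨hr, x₀, hsub⟩ => ?_⟩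
  have := diam_mono hsub hE
  rw [diam_ball_eq x₀ hr.le] at this
  linarith

theorem inner_radius_ge_min_width_div (n : ℕ) (hn : 0 < n)
    (E : Set (EuclideanSpace ℝ (Fin n)))
    (hE : Bornology.IsBounded E) (hconv : Convex ℝ E)
    (hint : (interior E).Nonempty) :
    (sInf {w : ℝ | ∃ ω : EuclideanSpace ℝ (Fin n), ‖ω‖ = 1 ∧
        w = sSup {c : ℝ | ∃ x ∈ E, ∃ y ∈ E, c = inner ℝ (x - y) ω}}) / (n + 1)
      ≤ sSup {r : ℝ | 0 < r ∧ ∃ x₀, Metric.ball x₀ r ⊆ E} := by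
  have : Nonempty (Fin n) := ⟨⟨0, hn⟩⟩
  have hEne : E.Nonempty := hint.mono interior_subset
  change sInf {w | ∃ ω, ‖ω‖ = 1 ∧ w = directionalWidth E ω} / (n + 1) ≤ _
  set W := sInf {w | ∃ ω, ‖ω‖ = 1 ∧ w = directionalWidth E ω}
  have hW : ∀ w ∈ {w | ∃ ω, ‖ω‖ = 1 ∧ w = directionalWidth E ω}, 0 ≤ w := by
    rintro _ ⟨ω, -, rfl⟩
    exact hE.directionalWidth_nonneg ω
  have hρ : 0 ≤ W / (n + 1) := by have := Real.sInf_nonneg hW; positivity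
  obtain ⟨x₀, hx₀⟩ := hE.isCompact_closure.exists_ball_subset_of_forall_width hconv.closure
    hEne.closure hρ fun u hu => by
      obtain ⟨z, hz, p, hp, hzp⟩ := hE.exists_directionalWidth_le hEne u
      refine ⟨z, hz, p, hp, ?_⟩
      rw [finrank_euclideanSpace_fin, mul_div_cancel₀ _ (by positivity)]
      exact (csInf_le ⟨0, hW⟩ ⟨u, hu, rfl⟩).trans hzp
  have hball : ball x₀ (W / (n + 1)) ⊆ E :=
    (hconv.interior_closure_eq_interior_of_nonempty_interior hint ▸
      interior_maximal hx₀ isOpen_ball).trans interior_subset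
  rcases hρ.eq_or_lt with h0 | hpos
  · exact h0 ▸ Real.sSup_nonneg fun r hr => hr.1.le
  · exact le_csSup hE.bddAbove_setOf_ball_subset ⟨hpos, x₀, hball⟩
end

section
/- The metric projection Π_E onto a nonempty closed convex set E ⊆ ℝⁿ, when restricted to the sphere ∂B_R(q) of a ball B_R(q) ⊇ E containing E, maps ∂B_R(q) onto the boundary ∂E of E (assuming E has nonempty interior). -/
open Metric Set
open scoped RealInnerProductSpace

theorem metric_projection_sphere_onto_boundary (n : ℕ)
    (E : Set (EuclideanSpace ℝ (Fin n)))
    (hcomp : IsCompact E) (hconv : Convex ℝ E)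
    (hne : E.Nonempty) (hint : (interior E).Nonempty)
    (R : ℝ) (hR : 0 < R) (q : EuclideanSpace ℝ (Fin n))
    (hsub : E ⊆ Metric.ball q R) :
    {p : EuclideanSpace ℝ (Fin n) |
        ∃ x ∈ Metric.sphere q R, p ∈ E ∧ dist x p = Metric.infDist x E}
      = frontier E := by
  have hclosed : IsClosed E := hcomp.isClosed
  ext p
  simp only [Set.mem_setOf_eq, hclosed.frontier_eq, Set.mem_diff]
  constructor
  · rintro ⟨x, hx, hpE, hproj⟩
    have hxE : x ∉ E := by
      intro hxE
      have h1 := hsub hxE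
      rw [Metric.mem_ball] at h1
      rw [Metric.mem_sphere] at hx
      linarith
    refine ⟨hpE, fun hpI => ?_⟩
    obtain ⟨ε, hε, hball⟩ := Metric.isOpen_iff.1 isOpen_interior p hpI
    have hxp : (0:ℝ) < ‖x - p‖ := by
      rw [norm_sub_pos_iff]
      intro h; exact hxE (h ▸ hpE)
    set s : ℝ := min (ε / (2 * ‖x - p‖)) 1 with hs
    have hs0 : 0 < s := lt_min (by positivity) one_pos
    have hs1 : s ≤ 1 := min_le_right _ _
    set p' := p + s • (x - p) with hp'
    have hdp : dist p' p = s * ‖x - p‖ := by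
      rw [dist_eq_norm, hp', add_sub_cancel_left, norm_smul, Real.norm_eq_abs,
        abs_of_pos hs0]
    have hp'E : p' ∈ E := by
      apply interior_subset (hball ?_)
      rw [Metric.mem_ball, hdp]
      have h2 : s * ‖x - p‖ ≤ (ε / (2 * ‖x - p‖)) * ‖x - p‖ :=
        mul_le_mul_of_nonneg_right (min_le_left _ _) (norm_nonneg _)
      have h3 : (ε / (2 * ‖x - p‖)) * ‖x - p‖ = ε / 2 := by
        field_simp
      linarith
    have hd : dist x p' = (1 - s) * ‖x - p‖ := by
      have h4 : x - p' = (1 - s) • (x - p) := by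
        rw [hp']; module
      rw [dist_eq_norm, h4, norm_smul, Real.norm_eq_abs,
        abs_of_nonneg (by linarith : (0:ℝ) ≤ 1 - s)]
    have h5 : Metric.infDist x E ≤ dist x p' := Metric.infDist_le_dist_of_mem hp'E
    rw [hd, ← hproj, dist_eq_norm] at h5
    nlinarith
  · rintro ⟨hpE, hpI⟩
    obtain ⟨f, hf⟩ := geometric_hahn_banach_open_point hconv.interior isOpen_interior hpI
    obtain ⟨a, ha⟩ := hint
    -- f ≤ f p on all of E
    have hfE : ∀ y ∈ E, f y ≤ f p := by
      intro y hy
      by_contra h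
      push_neg at h
      have hfa := hf a ha
      set r := (f p - f a) / (f y - f a) with hr
      have h1 : r < 1 := (div_lt_one (by linarith)).2 (by linarith)
      have h0 : 0 < r := div_pos (by linarith) (by linarith)
      obtain ⟨s, hrs, hs1⟩ := exists_between h1
      have hmem : (1 - s) • a + s • y ∈ interior E :=
        hconv.combo_interior_closure_mem_interior ha (subset_closure hy)
          (by linarith) (by linarith) (by ring)
      have h6 := hf _ hmem
      simp only [map_add, map_smul, smul_eq_mul] at h6
      have h7 : f p - f a < s * (f y - f a) := by
        calc f p - f a = r * (f y - f a) := by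
              rw [hr, div_mul_cancel₀]; linarith
          _ < s * (f y - f a) := by
              exact mul_lt_mul_of_pos_right hrs (by linarith)
      nlinarith
    set v := (InnerProductSpace.toDual ℝ (EuclideanSpace ℝ (Fin n))).symm f with hvdef
    have hv : ∀ z, ⟪v, z⟫ = f z := fun z => InnerProductSpace.toDual_symm_apply
    have hvne : v ≠ 0 := by
      intro h
      have hfa := hf a ha
      rw [← hv a, ← hv p, h] at hfa
      simp at hfa
    have hvpos : (0:ℝ) < ‖v‖ := norm_pos_iff.2 hvne
    have hpq : dist p q < R := Metric.mem_ball.1 (hsub hpE)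
    set g : ℝ → ℝ := fun t => dist (p + t • v) q with hg
    have hgc : Continuous g := by
      apply Continuous.dist _ continuous_const
      exact continuous_const.add (continuous_id.smul continuous_const)
    set T : ℝ := (R + dist p q) / ‖v‖ with hT
    have hT0 : (0:ℝ) ≤ T := by positivity
    have hgT : R ≤ g T := by
      have heq : p + T • v - q = T • v + (p - q) := by module
      have h8 : ‖T • v‖ - ‖p - q‖ ≤ ‖T • v + (p - q)‖ := by
        have h := norm_sub_norm_le (T • v) (-(p - q))
        rw [norm_neg, sub_neg_eq_add] at h
        exact h
      have h9 : ‖T • v‖ = R + dist p q := by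
        rw [norm_smul, Real.norm_eq_abs, abs_of_nonneg hT0, hT,
          div_mul_cancel₀ _ (ne_of_gt hvpos)]
      have h10 : dist p q = ‖p - q‖ := dist_eq_norm p q
      simp only [hg, dist_eq_norm, heq]
      linarith
    have hg0 : g 0 ≤ R := by
      simp only [hg, zero_smul, add_zero]
      exact hpq.le
    obtain ⟨t, ht, hgt⟩ := intermediate_value_Icc hT0 hgc.continuousOn ⟨hg0, hgT⟩
    set x := p + t • v with hx
    have hdxp : dist x p = t * ‖v‖ := by
      rw [hx, dist_eq_norm, add_sub_cancel_left, norm_smul, Real.norm_eq_abs,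
        abs_of_nonneg ht.1]
    have hkey : ∀ y ∈ E, dist x p ≤ dist x y := by
      intro y hy
      have hin : (0:ℝ) ≤ ⟪p - y, v⟫ := by
        rw [real_inner_comm, hv (p - y), map_sub]
        have := hfE y hy
        linarith
      have heq2 : x - y = (p - y) + t • v := by rw [hx]; module
      have hsq : (t * ‖v‖)^2 ≤ ‖(p - y) + t • v‖^2 := by
        rw [norm_add_sq_real, real_inner_smul_right, norm_smul, Real.norm_eq_abs,
          abs_of_nonneg ht.1]
        nlinarith [sq_nonneg ‖p - y‖, mul_nonneg ht.1 hin]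
      have h11 := Real.sqrt_le_sqrt hsq
      rw [Real.sqrt_sq (mul_nonneg ht.1 (norm_nonneg _)), Real.sqrt_sq (norm_nonneg _)] at h11
      rw [hdxp, dist_eq_norm, heq2]
      exact h11
    refine ⟨x, ?_, hpE, ?_⟩
    · rw [Metric.mem_sphere]; exact hgt
    · refine le_antisymm ?_ (Metric.infDist_le_dist_of_mem hpE)
      by_contra h
      push_neg at h
      obtain ⟨y, hy, hlt⟩ := (Metric.infDist_lt_iff hne).1 h
      exact absurd (hkey y hy) (not_le.2 hlt)
end
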